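/- Let G be a countable group, φ an irreducible action of G on the line, and H a commensurated subgroup of G such that the restriction of φ to H admits no minimal set, i.e. there is no nonempty closed subset Λ of ℝ invariant under φ(H) on which every φ(H)-orbit is dense. Then for every g ∈ G and every irreducible wandering interval I for φ(H), the image φ(g)(I) is again an irreducible wandering interval for φ(H). -/

import Mathlib

open Topology Filter

/-!  `ℝ ≃o ℝ` is the group `Homeo₀(ℝ)` of orientation-preserving homeomorphisms of the
line (order isomorphisms of `ℝ`).  An action of a group `G` on the line is a group
homomorphism `G →* (ℝ ≃o ℝ)`. -/

/-- The underlying map of an action, as a point of the function space `G → ℝ → ℝ`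
(equipped with the product topology of pointwise convergence and its Borel σ-algebra). -/
def actMap {G : Type*} [Group G] (φ : G →* (ℝ ≃o ℝ)) : G → ℝ → ℝ := fun g => ⇑(φ g)

/-- An action is minimal if every orbit is dense. -/
def IsMinimalAction {G : Type*} [Group G] (φ : G →* (ℝ ≃o ℝ)) : Prop :=
  ∀ x : ℝ, Dense {y : ℝ | ∃ g : G, φ g x = y}

/-- Conjugation of (the underlying map of) an action by `f ∈ Homeo₀(ℝ)`. -/
def conjFun {G : Type*} (f : ℝ ≃o ℝ) (F : G → ℝ → ℝ) : G → ℝ → ℝ :=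
  fun g x => f (F g (f.symm x))

/-- The space of minimal actions of `G` on the line, as a subset of the function
space `G → ℝ → ℝ`. -/
def RepMin (G : Type*) [Group G] : Set (G → ℝ → ℝ) :=
  {F | ∃ φ : G →* (ℝ ≃o ℝ), IsMinimalAction φ ∧ F = actMap φ}

/-- `G` belongs to the class `𝒞`: the conjugacy relation on `RepMin G` is smooth, i.e.
there is a Borel map to `ℝ` whose fibers are exactly the conjugacy classes. -/
def ClassC (G : Type*) [Group G] : Prop :=
  ∃ r : (RepMin G) → ℝ, Measurable r ∧
    ∀ φ ψ : RepMin G, (r φ = r ψ ↔ ∃ f : ℝ ≃o ℝ, conjFun f (φ : G → ℝ → ℝ) = (ψ : G → ℝ → ℝ))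

/-- `H` is a commensurated subgroup of `G`: for every `g`, `H ∩ gHg⁻¹` has finite index
in both `H` and `gHg⁻¹`. -/
def Commensurated {G : Type*} [Group G] (H : Subgroup G) : Prop :=
  ∀ g : G, Subgroup.Commensurable H (Subgroup.map (MulAut.conj g).toMonoidHom H)

/-- The restriction of `φ` to `H` admits a minimal set: a nonempty closed
`φ(H)`-invariant set on which all `φ(H)`-orbits are dense. -/
def HasMinimalSetOn {G : Type*} [Group G] (φ : G →* (ℝ ≃o ℝ)) (H : Subgroup G) : Prop :=
  ∃ Λ : Set ℝ, Λ.Nonempty ∧ IsClosed Λ ∧ (∀ h ∈ H, (φ h) '' Λ = Λ) ∧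
    ∀ x ∈ Λ, Λ ⊆ closure {y : ℝ | ∃ h ∈ H, φ h x = y}

/-- `I` is a wandering interval for `φ(H)`: a nonempty open bounded interval moved off
itself or to itself by each element of `φ(H)`. -/
def IsWanderingInterval {G : Type*} [Group G] (φ : G →* (ℝ ≃o ℝ)) (H : Subgroup G)
    (I : Set ℝ) : Prop :=
  (∃ a b : ℝ, a < b ∧ I = Set.Ioo a b) ∧
    ∀ h ∈ H, (φ h) '' I = I ∨ ((φ h) '' I) ∩ I = ∅

/-- An irreducible wandering interval: the stabilizer of `I` in `φ(H)` acts on `I`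
without a global fixed point. -/
def IsIrredWanderingInterval {G : Type*} [Group G] (φ : G →* (ℝ ≃o ℝ)) (H : Subgroup G)
    (I : Set ℝ) : Prop :=
  IsWanderingInterval φ H I ∧
    ∀ x ∈ I, ∃ h ∈ H, (φ h) '' I = I ∧ φ h x ≠ x

/-! Conjugation by `g` makes `φ g '' I` an irreducible wandering interval for `gHg⁻¹`, and
irreducibility passes to the finite-index subgroup `H ⊓ gHg⁻¹`: it contains a power of every
element, and a power of an order automorphism fixes the same points. Conversely, let `J` be an
irreducible wandering interval of a finite-index subgroup `K ≤ H`, and `h ∈ H`. If `h J` and `J`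
are nested, a power of `h` lying in `K` nests them as well, so it fixes `J`, and then so does `h`.
Otherwise `h J` and `J` cross or are disjoint, and crossing is impossible for two wandering
intervals of `K ⊓ hKh⁻¹` one of which is irreducible. -/

open Set

theorem RelIso.coe_pow {α : Type*} {r : α → α → Prop} (e : r ≃r r) (n : ℕ) :
    ⇑(e ^ n) = (⇑e)^[n] := by
  induction n with
  | zero => rfl
  | succ n ih => rw [pow_succ, coe_mul, ih, Function.iterate_succ]

namespace OrderIso

variable {α : Type*} [LinearOrder α]

theorem pow_apply_eq_self_iff (f : α ≃o α) {n : ℕ} (hn : 0 < n) {x : α} :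
    (f ^ n) x = x ↔ f x = x := by
  simpa [RelIso.coe_pow] using
    Function.Commute.id_right.iterate_pos_eq_iff_map_eq f.monotone strictMono_id hn (x := x)

variable [DenselyOrdered α]

theorem image_Ioo_eq_self_iff (f : α ≃o α) {a b : α} (hab : a < b) :
    f '' Ioo a b = Ioo a b ↔ f a = a ∧ f b = b := by
  rw [f.image_Ioo]
  refine ⟨fun h => ?_, fun ⟨ha, hb⟩ => by rw [ha, hb]⟩
  obtain ⟨ha₁, hb₁⟩ := (Ioo_subset_Ioo_iff hab).1 h.ge
  obtain ⟨ha₂, hb₂⟩ := (Ioo_subset_Ioo_iff (f.strictMono hab)).1 h.le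
  exact ⟨le_antisymm ha₁ ha₂, le_antisymm hb₂ hb₁⟩

theorem image_Ioo_eq_self_of_pow (f : α ≃o α) {a b : α} (hab : a < b) {m : ℕ} (hm : 0 < m)
    (hw : (f ^ m) '' Ioo a b = Ioo a b ∨ (f ^ m) '' Ioo a b ∩ Ioo a b = ∅)
    (hnest : a ≤ f a ∧ f b ≤ b ∨ f a ≤ a ∧ b ≤ f b) :
    f '' Ioo a b = Ioo a b := by
  suffices hfm : (f ^ m) '' Ioo a b = Ioo a b by
    rw [image_Ioo_eq_self_iff _ hab, pow_apply_eq_self_iff _ hm,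
      pow_apply_eq_self_iff _ hm] at hfm
    rwa [image_Ioo_eq_self_iff _ hab]
  refine hw.resolve_right (Nonempty.ne_empty ?_)
  have hmab := (f ^ m).strictMono hab
  rw [(f ^ m).image_Ioo, Ioo_inter_Ioo, nonempty_Ioo, max_lt_iff, lt_min_iff, lt_min_iff]
  rw [RelIso.coe_pow] at hmab ⊢
  rcases hnest with ⟨ha, hb⟩ | ⟨ha, hb⟩
  · have ha' := Monotone.monotone_iterate_of_le_map f.monotone ha (Nat.zero_le m)
    have hb' := Monotone.antitone_iterate_of_map_le f.monotone hb (Nat.zero_le m)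
    simp only [Function.iterate_zero_apply] at ha' hb'
    exact ⟨⟨hmab, hmab.trans_le hb'⟩, ha'.trans_lt hmab, hab⟩
  · have ha' := Monotone.antitone_iterate_of_map_le f.monotone ha (Nat.zero_le m)
    have hb' := Monotone.monotone_iterate_of_le_map f.monotone hb (Nat.zero_le m)
    simp only [Function.iterate_zero_apply] at ha' hb'
    exact ⟨⟨hmab, ha'.trans_lt hab⟩, hab.trans_le hb', hab⟩

end OrderIso

theorem Subgroup.relIndex_map_conj_ne_zero {G : Type*} [Group G] {K H : Subgroup G}
    (hle : K ≤ H) (hK : K.relIndex H ≠ 0) {h : G} (hh : h ∈ H) :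
    (K.map (MulAut.conj h).toMonoidHom).relIndex K ≠ 0 := by
  have hH : H.map (MulAut.conj h).toMonoidHom = H :=
    mem_normalizer_iff_map_conj_eq.mp (le_normalizer hh)
  have hconj : (K.map (MulAut.conj h).toMonoidHom).relIndex H = K.relIndex H := by
    conv_lhs => rw [← hH]
    exact relIndex_map_map_of_injective K H (MulAut.conj h).injective
  exact mt (relIndex_eq_zero_of_le_right hle) (hconj ▸ hK)

section WanderingInterval

variable {G : Type*} [Group G] {φ : G →* (ℝ ≃o ℝ)}

theorem IsWanderingInterval.of_le {L M : Subgroup G} {J : Set ℝ}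
    (hJ : IsWanderingInterval φ M J) (hLM : L ≤ M) : IsWanderingInterval φ L J :=
  ⟨hJ.1, fun k hk => hJ.2 k (hLM hk)⟩

theorem apply_conj_apply (g h : G) (x : ℝ) :
    φ ((MulAut.conj g).toMonoidHom h) (φ g x) = φ g (φ h x) := by
  simp [RelIso.mul_apply]

theorem IsIrredWanderingInterval.image_conj {H : Subgroup G} {I : Set ℝ}
    (hI : IsIrredWanderingInterval φ H I) (g : G) :
    IsIrredWanderingInterval φ (H.map (MulAut.conj g).toMonoidHom) (φ g '' I) := by
  obtain ⟨⟨⟨a, b, hab, rfl⟩, hw⟩, hirr⟩ := hI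
  have himage : ∀ h (S : Set ℝ),
      φ ((MulAut.conj g).toMonoidHom h) '' (φ g '' S) = φ g '' (φ h '' S) := fun h S => by
    simp only [image_image, apply_conj_apply]
  refine ⟨⟨⟨φ g a, φ g b, (φ g).strictMono hab, (φ g).image_Ioo a b⟩, ?_⟩, ?_⟩
  · rintro _ ⟨h, hh, rfl⟩
    rw [himage, ← image_inter (φ g).injective]
    exact (hw h hh).imp (congrArg _) fun hdisj => by rw [hdisj, image_empty]
  · rintro _ ⟨x, hx, rfl⟩
    obtain ⟨h, hh, hhI, hhx⟩ := hirr x hx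
    exact ⟨_, Subgroup.mem_map_of_mem _ hh, by rw [himage, hhI], by
      rwa [apply_conj_apply, Ne, (φ g).injective.eq_iff]⟩

theorem IsIrredWanderingInterval.inf_of_relIndex_ne_zero {L M : Subgroup G} {J : Set ℝ}
    (hJ : IsIrredWanderingInterval φ M J) (hLM : L.relIndex M ≠ 0) :
    IsIrredWanderingInterval φ (L ⊓ M) J := by
  obtain ⟨a, b, hab, rfl⟩ := hJ.1.1
  refine ⟨hJ.1.of_le inf_le_right, fun x hx => ?_⟩
  obtain ⟨k, hkM, hkJ, hkx⟩ := hJ.2 x hx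
  obtain ⟨n, hn, -, hkn⟩ := Subgroup.exists_pow_mem_of_relIndex_ne_zero hLM hkM
  refine ⟨k ^ n, hkn, ?_, ?_⟩
  · rwa [map_pow, OrderIso.image_Ioo_eq_self_iff _ hab, OrderIso.pow_apply_eq_self_iff _ hn,
      OrderIso.pow_apply_eq_self_iff _ hn, ← OrderIso.image_Ioo_eq_self_iff _ hab]
  · rwa [map_pow, Ne, OrderIso.pow_apply_eq_self_iff _ hn]

/-- An element stabilizing `Ioo a b` fixes the endpoint `c` lying in `Ioo a' b'`, so it cannot
move `Ioo a' b'` off itself; it then fixes the endpoint `e` as well. -/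
theorem IsIrredWanderingInterval.not_crossing {L : Subgroup G} {a b a' b' c e : ℝ}
    (hJ : IsIrredWanderingInterval φ L (Ioo a b)) (hJ' : IsWanderingInterval φ L (Ioo a' b'))
    (he : e = a' ∨ e = b') (heJ : e ∈ Ioo a b) (hc : c = a ∨ c = b) (hcJ' : c ∈ Ioo a' b') :
    False := by
  have hab : a < b := heJ.1.trans heJ.2
  have ha'b' : a' < b' := hcJ'.1.trans hcJ'.2
  obtain ⟨k, hkL, hkJ, hke⟩ := hJ.2 e heJ
  rw [OrderIso.image_Ioo_eq_self_iff _ hab] at hkJ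
  have hkc : φ k c = c := by rcases hc with rfl | rfl <;> simp [hkJ]
  have hkJ' : φ k '' Ioo a' b' = Ioo a' b' := by
    refine (hJ'.2 k hkL).resolve_right (nonempty_iff_ne_empty.mp ⟨c, ?_, hcJ'⟩)
    exact hkc ▸ mem_image_of_mem _ hcJ'
  rw [OrderIso.image_Ioo_eq_self_iff _ ha'b'] at hkJ'
  rcases he with rfl | rfl
  exacts [hke hkJ'.1, hke hkJ'.2]

theorem IsIrredWanderingInterval.image_eq_or_inter_eq_empty {K H : Subgroup G} {J : Set ℝ}
    (hJ : IsIrredWanderingInterval φ K J) (hle : K ≤ H) (hK : K.relIndex H ≠ 0)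
    {h : G} (hh : h ∈ H) :
    φ h '' J = J ∨ φ h '' J ∩ J = ∅ := by
  obtain ⟨a, b, hab, rfl⟩ := hJ.1.1
  obtain ⟨m, hm, -, hhm⟩ := Subgroup.exists_pow_mem_of_relIndex_ne_zero hK hh
  by_cases hnest : a ≤ φ h a ∧ φ h b ≤ b ∨ φ h a ≤ a ∧ b ≤ φ h b
  · refine Or.inl ((φ h).image_Ioo_eq_self_of_pow hab hm ?_ hnest)
    rw [← map_pow]
    exact hJ.1.2 _ hhm.1
  have hJL := hJ.inf_of_relIndex_ne_zero (Subgroup.relIndex_map_conj_ne_zero hle hK hh)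
  have hJ'L : IsWanderingInterval φ (K.map (MulAut.conj h).toMonoidHom ⊓ K) (φ h '' Ioo a b) :=
    (hJ.image_conj h).1.of_le inf_le_left
  rw [(φ h).image_Ioo] at hJ'L ⊢
  rcases (Ioo (φ h a) (φ h b) ∩ Ioo a b).eq_empty_or_nonempty with hdisj | hover
  · exact Or.inr hdisj
  rw [Ioo_inter_Ioo, nonempty_Ioo, max_lt_iff, lt_min_iff, lt_min_iff] at hover
  push Not at hnest
  obtain ⟨hright, hleft⟩ := hnest
  exfalso
  rcases lt_or_ge a (φ h a) with ha | ha
  · exact hJL.not_crossing hJ'L (Or.inl rfl) ⟨ha, hover.1.2⟩ (Or.inr rfl)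
      ⟨hover.1.2, hright ha.le⟩
  rcases ha.lt_or_eq with ha | ha
  · exact hJL.not_crossing hJ'L (Or.inr rfl) ⟨hover.2.1, hleft ha.le⟩ (Or.inl rfl)
      ⟨ha, hover.2.1⟩
  · exact (hleft ha.le).not_gt (hright ha.ge)

theorem IsIrredWanderingInterval.of_le_of_relIndex_ne_zero {K H : Subgroup G} {J : Set ℝ}
    (hJ : IsIrredWanderingInterval φ K J) (hle : K ≤ H) (hK : K.relIndex H ≠ 0) :
    IsIrredWanderingInterval φ H J :=
  ⟨⟨hJ.1.1, fun _ hh => hJ.image_eq_or_inter_eq_empty hle hK hh⟩,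
    fun x hx => (hJ.2 x hx).imp fun _ hk => ⟨hle hk.1, hk.2⟩⟩

end WanderingInterval

theorem stmt7_general (G : Type*) [Group G]
    (φ : G →* (ℝ ≃o ℝ))
    (H : Subgroup G) (hH : Commensurated H) :
    ∀ g : G, ∀ I : Set ℝ, IsIrredWanderingInterval φ H I →
      IsIrredWanderingInterval φ H ((φ g) '' I) := by
  intro g I hI
  obtain ⟨hrel, hrel'⟩ := hH g
  exact ((hI.image_conj g).inf_of_relIndex_ne_zero hrel).of_le_of_relIndex_ne_zero inf_le_left
    (by rwa [Subgroup.inf_relIndex_left])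

theorem stmt7 (G : Type*) [Group G] [Countable G]
    (φ : G →* (ℝ ≃o ℝ)) (hirr : ∀ x : ℝ, ∃ g : G, φ g x ≠ x)
    (H : Subgroup G) (hH : Commensurated H)
    (hnomin : ¬ HasMinimalSetOn φ H) :
    ∀ g : G, ∀ I : Set ℝ, IsIrredWanderingInterval φ H I →
      IsIrredWanderingInterval φ H ((φ g) '' I) :=
  stmt7_general G φ H hH
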